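/- arXiv:0811.4003 — 3 statements merged into one kernel-verified Lean document; each statement's English description precedes it below -/
import Mathlib

section
/- Let ρ be a density matrix on ℂ^M ⊗ ℂ^N (indexed by Fin M × Fin N), and let U_A be any M×M unitary matrix. Then (1/√2)·‖ρ − (U_A ⊗ I_N) ρ (U_A ⊗ I_N)†‖_F ≤ √(2·(Tr(ρ²) − 1/(M·N))). In particular, the maximal LNU distance d_max(ρ) = max over unitaries U_A commuting with Tr_B(ρ) of (1/√2)·‖ρ − (U_A ⊗ I_N) ρ (U_A ⊗ I_N)†‖_F obeys d_max(ρ) ≤ √(2·(Tr(ρ²) − 1/(M·N))). -/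
open Matrix ComplexOrder Kronecker

/-- The Frobenius norm of a complex matrix: `‖A‖_F = √(Tr(AᴴA))`. -/
noncomputable def frobNorm {n : Type*} [Fintype n] (A : Matrix n n ℂ) : ℝ :=
  Real.sqrt ((Aᴴ * A).trace.re)

/-- Partial trace over the second tensor factor. -/
noncomputable def ptraceB {M N : ℕ} (ρ : Matrix (Fin M × Fin N) (Fin M × Fin N) ℂ) :
    Matrix (Fin M) (Fin M) ℂ :=
  Matrix.of fun i j => ∑ k, ρ (i, k) (j, k)

/-! Conjugation by `V = U_A ⊗ I` is a Frobenius isometry fixing the maximally mixed state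
`σ = I/(MN)`, so `ρ - VρV† = (ρ - σ) - V(ρ - σ)V†` has norm at most `2‖ρ - σ‖`, and
`‖ρ - σ‖² = Tr ρ² - 1/(MN)` because `ρ` is Hermitian with `Tr ρ = 1`. -/

attribute [local instance] Matrix.frobeniusNormedAddCommGroup

section Frobenius

variable {m n : Type*} [Fintype m] [Fintype n]

lemma re_trace_conjTranspose_mul_self (A : Matrix m n ℂ) : (Aᴴ * A).trace.re = ‖A‖ ^ 2 := by
  rw [frobenius_norm_def, ← Real.rpow_natCast, ← Real.rpow_mul (by positivity)]
  simp only [trace, diag, mul_apply, conjTranspose_apply, Complex.re_sum, Complex.star_def]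
  rw [Finset.sum_comm]
  norm_num [Complex.conj_mul', ← Complex.ofReal_pow]

lemma frobNorm_eq_norm (A : Matrix n n ℂ) : frobNorm A = ‖A‖ := by
  rw [frobNorm, re_trace_conjTranspose_mul_self, Real.sqrt_sq (norm_nonneg A)]

variable [DecidableEq n]

lemma norm_unitary_conj {V : Matrix n n ℂ} (hV : V ∈ unitaryGroup n ℂ) (A : Matrix n n ℂ) :
    ‖V * A * Vᴴ‖ = ‖A‖ := by
  have hVV : Vᴴ * V = 1 := hV.1
  have hsq : ‖V * A * Vᴴ‖ ^ 2 = ‖A‖ ^ 2 := by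
    rw [← re_trace_conjTranspose_mul_self, ← re_trace_conjTranspose_mul_self]
    simp only [conjTranspose_mul, conjTranspose_conjTranspose, Matrix.mul_assoc]
    rw [← Matrix.mul_assoc Vᴴ, hVV, Matrix.one_mul, trace_mul_comm, Matrix.mul_assoc,
      Matrix.mul_assoc, hVV, Matrix.mul_one]
  exact (sq_eq_sq₀ (norm_nonneg _) (norm_nonneg _)).1 hsq

lemma norm_sub_unitary_conj_le {V : Matrix n n ℂ} (hV : V ∈ unitaryGroup n ℂ)
    (A : Matrix n n ℂ) (c : ℂ) : ‖A - V * A * Vᴴ‖ ≤ 2 * ‖A - c • 1‖ := by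
  have hVV : V * Vᴴ = 1 := hV.2
  have hrecentre : A - V * A * Vᴴ = (A - c • 1) - V * (A - c • 1) * Vᴴ := by
    rw [Matrix.mul_sub, Matrix.sub_mul, Matrix.mul_smul, Matrix.mul_one, Matrix.smul_mul, hVV]
    abel
  calc ‖A - V * A * Vᴴ‖ ≤ ‖A - c • 1‖ + ‖V * (A - c • 1) * Vᴴ‖ := by
        rw [hrecentre]; exact norm_sub_le _ _
    _ = 2 * ‖A - c • 1‖ := by rw [norm_unitary_conj hV]; ring

lemma norm_sub_smul_one_sq {A : Matrix n n ℂ} (hA : A.IsHermitian) (r : ℝ) :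
    ‖A - (r : ℂ) • 1‖ ^ 2
      = (A * A).trace.re - 2 * r * A.trace.re + r ^ 2 * Fintype.card n := by
  have hH : (A - (r : ℂ) • 1)ᴴ = A - (r : ℂ) • 1 := by
    simp [conjTranspose_sub, hA.eq, conjTranspose_smul]
  rw [← re_trace_conjTranspose_mul_self, hH]
  simp only [Matrix.sub_mul, Matrix.mul_sub, Matrix.smul_mul, Matrix.mul_smul, Matrix.one_mul,
    Matrix.mul_one, trace_sub, trace_smul, trace_one, Complex.sub_re, smul_eq_mul,
    Complex.mul_re, Complex.ofReal_re, Complex.ofReal_im, Complex.sub_im, Complex.mul_im,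
    Complex.natCast_re, Complex.natCast_im, zero_mul, mul_zero, sub_zero, add_zero]
  ring

lemma norm_sub_inv_card_smul_one_sq {ρ : Matrix n n ℂ} (hρ : ρ.IsHermitian)
    (htr : ρ.trace = 1) :
    ‖ρ - (((Fintype.card n : ℝ)⁻¹ : ℝ) : ℂ) • 1‖ ^ 2
      = (ρ * ρ).trace.re - 1 / Fintype.card n := by
  have hinv := mul_self_mul_inv (Fintype.card n : ℝ)⁻¹
  rw [inv_inv] at hinv
  rw [norm_sub_smul_one_sq hρ, htr, Complex.one_re]
  linear_combination hinv

lemma inv_sqrt_two_mul_norm_sub_unitary_conj_le {ρ : Matrix n n ℂ} (hρ : ρ.IsHermitian)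
    (htr : ρ.trace = 1) {V : Matrix n n ℂ} (hV : V ∈ unitaryGroup n ℂ) :
    1 / √2 * ‖ρ - V * ρ * Vᴴ‖ ≤ √(2 * ((ρ * ρ).trace.re - 1 / Fintype.card n)) := by
  set c : ℝ := (Fintype.card n : ℝ)⁻¹
  calc 1 / √2 * ‖ρ - V * ρ * Vᴴ‖ ≤ 1 / √2 * (2 * ‖ρ - (c : ℂ) • 1‖) := by
        gcongr; exact norm_sub_unitary_conj_le hV ρ c
    _ = √2 * ‖ρ - (c : ℂ) • 1‖ := by
        field_simp; rw [Real.sq_sqrt zero_le_two]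
    _ = √(2 * ((ρ * ρ).trace.re - 1 / Fintype.card n)) := by
        rw [← norm_sub_inv_card_smul_one_sq hρ htr, Real.sqrt_mul zero_le_two,
          Real.sqrt_sq (norm_nonneg _)]

end Frobenius

theorem lnu_distance_upper_bound_general {M N : ℕ}
    (ρ : Matrix (Fin M × Fin N) (Fin M × Fin N) ℂ)
    (hherm : ρ.IsHermitian) (htr : ρ.trace = 1)
    (UA : Matrix (Fin M) (Fin M) ℂ) (hU : UA ∈ Matrix.unitaryGroup (Fin M) ℂ) :
    (1 / Real.sqrt 2) *
        frobNorm (ρ - (UA ⊗ₖ (1 : Matrix (Fin N) (Fin N) ℂ)) * ρ *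
          (UA ⊗ₖ (1 : Matrix (Fin N) (Fin N) ℂ))ᴴ)
      ≤ Real.sqrt (2 * (((ρ * ρ).trace).re - 1 / (M * N))) := by
  have hV : UA ⊗ₖ (1 : Matrix (Fin N) (Fin N) ℂ) ∈ unitaryGroup (Fin M × Fin N) ℂ :=
    kronecker_mem_unitary hU (one_mem _)
  have hcard : ((Fintype.card (Fin M × Fin N) : ℕ) : ℝ) = M * N := by simp
  rw [frobNorm_eq_norm, ← hcard]
  exact inv_sqrt_two_mul_norm_sub_unitary_conj_le hherm htr hV

/-- For any density matrix ρ on ℂ^M ⊗ ℂ^N and any M×M unitary U_A,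
the LNU distance (1/√2)‖ρ − (U_A ⊗ I)ρ(U_A ⊗ I)ᴴ‖_F is at most
√(2(Tr ρ² − 1/(MN))).  In particular this bounds the maximal LNU distance,
the maximum over unitaries commuting with Tr_B ρ. -/
theorem lnu_distance_upper_bound {M N : ℕ}
    (ρ : Matrix (Fin M × Fin N) (Fin M × Fin N) ℂ)
    (hherm : ρ.IsHermitian) (hpsd : ρ.PosSemidef) (htr : ρ.trace = 1)
    (UA : Matrix (Fin M) (Fin M) ℂ) (hU : UA ∈ Matrix.unitaryGroup (Fin M) ℂ) :
    (1 / Real.sqrt 2) *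
        frobNorm (ρ - (UA ⊗ₖ (1 : Matrix (Fin N) (Fin N) ℂ)) * ρ *
          (UA ⊗ₖ (1 : Matrix (Fin N) (Fin N) ℂ))ᴴ)
      ≤ Real.sqrt (2 * (((ρ * ρ).trace).re - 1 / (M * N))) :=
  lnu_distance_upper_bound_general ρ hherm htr UA hU
end

section
/- Let ρ be a density matrix on ℂ^M ⊗ ℂ^N. Suppose that for every orthonormal basis {v_1, …, v_M} of ℂ^M the dephased state Σ_{j=1}^{M} (|v_j⟩⟨v_j| ⊗ I_N) ρ (|v_j⟩⟨v_j| ⊗ I_N) is different from ρ (i.e. ρ has nonzero quantum discord). Then there exists an M×M unitary matrix U_A such that U_A · Tr_B(ρ) · U_A† = Tr_B(ρ) and (U_A ⊗ I_N) ρ (U_A ⊗ I_N)† ≠ ρ; that is, nonzero quantum discord implies nonzero LNU distance. -/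
open Matrix ComplexOrder Kronecker

/-!
Diagonalise `Tr_B ρ = ∑ⱼ λⱼ |vⱼ⟩⟨vⱼ|`. Each reflection `2 |vⱼ⟩⟨vⱼ| - 1` is a unitary fixing
`Tr_B ρ` under conjugation. For an idempotent `p`, conjugation by `2 p - 1` fixes `a` only if `p`
commutes with `a`; so if no local unitary moved `ρ`, every `Pⱼ = |vⱼ⟩⟨vⱼ| ⊗ I` would commute with
`ρ`, and then `∑ⱼ Pⱼ ρ Pⱼ = ρ ∑ⱼ Pⱼ = ρ`: the eigenbasis of `Tr_B ρ` would dephase `ρ` trivially.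
-/

section Ring

variable {R : Type*}

theorem IsIdempotentElem.commute_of_two_mul_sub_one_conj [Ring R] [IsAddTorsionFree R] {p a : R}
    (hp : IsIdempotentElem p) (h : (2 * p - 1) * a * (2 * p - 1) = a) : Commute p a := by
  have hu : (2 * p - 1) * (2 * p - 1) = 1 := by
    simp only [two_mul, mul_sub, sub_mul, add_mul, mul_add, hp.eq, one_mul, mul_one]; abel
  have hcomm : (2 * p - 1) * a = a * (2 * p - 1) := by
    conv_rhs => rw [← h, mul_assoc, hu, mul_one]
  refine nsmul_right_injective two_ne_zero ?_
  simpa [two_mul, two_nsmul, mul_sub, sub_mul, add_mul, mul_add] using hcomm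

theorem Finset.sum_mul_mul_self_eq_of_commute [Semiring R] {ι : Type*} (s : Finset ι) {q : ι → R}
    {a : R} (hsum : ∑ i ∈ s, q i = 1) (hq : ∀ i ∈ s, IsIdempotentElem (q i))
    (hqa : ∀ i ∈ s, Commute (q i) a) : ∑ i ∈ s, q i * a * q i = a := by
  calc ∑ i ∈ s, q i * a * q i = ∑ i ∈ s, a * q i :=
        Finset.sum_congr rfl fun i hi => by rw [(hqa i hi).eq, mul_assoc, (hq i hi).eq]
    _ = a := by rw [← Finset.mul_sum, hsum, mul_one]

theorem Unitary.mul_mul_star_of_commute [Monoid R] [StarMul R] {u a : R} (hu : u ∈ unitary R)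
    (h : Commute u a) : u * a * star u = a := by
  rw [h.eq, mul_assoc, Unitary.mul_star_self_of_mem hu, mul_one]

end Ring

theorem OrthonormalBasis.sum_star_mul_eq_ite {n ι 𝕜 : Type*} [Fintype n] [Fintype ι] [RCLike 𝕜]
    [DecidableEq ι] (b : OrthonormalBasis ι 𝕜 (EuclideanSpace 𝕜 n)) (i j : ι) :
    ∑ k, star (b i k) * b j k = if i = j then 1 else 0 := by
  rw [← orthonormal_iff_ite.mp b.orthonormal i j, EuclideanSpace.inner_eq_star_dotProduct,
    dotProduct]
  simp [mul_comm]

namespace Matrix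

variable {n 𝕜 : Type*} [Fintype n] [RCLike 𝕜]

theorem sum_vecMulVec_star_eq_one [DecidableEq n] {v : n → n → 𝕜}
    (hv : ∀ i j, ∑ k, star (v i k) * v j k = if i = j then 1 else 0) :
    ∑ j, vecMulVec (v j) (star (v j)) = 1 := by
  set V : Matrix n n 𝕜 := (of v)ᵀ
  have hVV : Vᴴ * V = 1 := by
    ext i j; simpa [V, mul_apply, one_apply] using hv i j
  calc ∑ j, vecMulVec (v j) (star (v j)) = V * Vᴴ := by
        ext a b; simp [V, mul_apply, vecMulVec_apply, Matrix.sum_apply]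
    _ = 1 := mul_eq_one_comm.mp hVV

theorem isStarProjection_vecMulVec_star {v : n → 𝕜} (hv : ∑ k, star (v k) * v k = 1) :
    IsStarProjection (vecMulVec v (star v)) where
  isIdempotentElem := by
    rw [IsIdempotentElem, vecMulVec_mul_vecMulVec, dotProduct]
    simp only [Pi.star_apply, hv, one_smul]
  isSelfAdjoint := by
    rw [IsSelfAdjoint, star_eq_conjTranspose, conjTranspose_vecMulVec, star_star]

theorem IsHermitian.commute_vecMulVec_star_of_mulVec_eq_smul {A : Matrix n n 𝕜}
    (hA : A.IsHermitian) {v : n → 𝕜} {r : ℝ} (hv : A *ᵥ v = r • v) :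
    Commute A (vecMulVec v (star v)) := by
  have hvA : star v ᵥ* A = r • star v := by
    rw [← hA.eq, vecMul_conjTranspose, star_star, hv, star_smul, star_trivial]
  simp only [Commute, SemiconjBy, mul_vecMulVec, vecMulVec_mul, hv, hvA, smul_vecMulVec,
    vecMulVec_smul]

variable (m n α : Type*) [Fintype m] [Fintype n] [DecidableEq m] [DecidableEq n] [CommSemiring α]

def kroneckerOneRingHom : Matrix m m α →+* Matrix (m × n) (m × n) α where
  toFun A := A ⊗ₖ 1
  map_one' := one_kronecker_one
  map_mul' A B := by rw [← mul_kronecker_mul, one_mul]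
  map_zero' := zero_kronecker _
  map_add' A B := add_kronecker _ _ _

end Matrix

theorem isHermitian_ptraceB {M N : ℕ} {ρ : Matrix (Fin M × Fin N) (Fin M × Fin N) ℂ}
    (hρ : ρ.IsHermitian) : (ptraceB ρ).IsHermitian := by
  ext i j
  simp only [conjTranspose_apply, ptraceB, of_apply, star_sum]
  exact Finset.sum_congr rfl fun k _ => hρ.apply (i, k) (j, k)

attribute [local instance] IsAddTorsionFree.of_module_rat

theorem discord_nonzero_implies_lnu_nonzero_general {M N : ℕ}
    (ρ : Matrix (Fin M × Fin N) (Fin M × Fin N) ℂ)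
    (hherm : ρ.IsHermitian)
    (hdiscord : ∀ v : Fin M → (Fin M → ℂ),
      (∀ i j, ∑ k, star (v i k) * v j k = if i = j then 1 else 0) →
      (∑ j, ((Matrix.vecMulVec (v j) (star (v j))) ⊗ₖ (1 : Matrix (Fin N) (Fin N) ℂ)) * ρ *
          ((Matrix.vecMulVec (v j) (star (v j))) ⊗ₖ (1 : Matrix (Fin N) (Fin N) ℂ))) ≠ ρ) :
    ∃ UA : Matrix (Fin M) (Fin M) ℂ, UA ∈ Matrix.unitaryGroup (Fin M) ℂ ∧
      UA * ptraceB ρ * UAᴴ = ptraceB ρ ∧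
      (UA ⊗ₖ (1 : Matrix (Fin N) (Fin N) ℂ)) * ρ *
        (UA ⊗ₖ (1 : Matrix (Fin N) (Fin N) ℂ))ᴴ ≠ ρ := by
  by_contra! hLNU
  have hR := isHermitian_ptraceB hherm
  set b := hR.eigenvectorBasis
  set P : Fin M → Matrix (Fin M) (Fin M) ℂ := fun j => vecMulVec (b j) (star (b j))
  set K := kroneckerOneRingHom (Fin M) (Fin N) ℂ
  have hb := b.sum_star_mul_eq_ite
  have hP j : IsStarProjection (P j) :=
    isStarProjection_vecMulVec_star ((hb j j).trans (if_pos rfl))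
  refine hdiscord (fun j => b j) hb <| Finset.sum_mul_mul_self_eq_of_commute (q := (K <| P ·)) _
    ?_ (fun j _ => (hP j).isIdempotentElem.map K) (fun j _ => ?_)
  · rw [← map_sum, sum_vecMulVec_star_eq_one hb, map_one]
  · have hPR : Commute (P j) (ptraceB ρ) :=
      (hR.commute_vecMulVec_star_of_mulVec_eq_smul (hR.mulVec_eigenvectorBasis j)).symm
    have hU := (hP j).two_mul_sub_one_mem_unitary
    have hUsa : (2 * P j - 1)ᴴ = 2 * P j - 1 := by
      simp [← star_eq_conjTranspose, (hP j).isSelfAdjoint.star_eq, two_mul]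
    have hρ := hLNU _ hU <| Unitary.mul_mul_star_of_commute hU <|
      ((Commute.ofNat_left 2 _).mul_left hPR).sub_left (Commute.one_left _)
    rw [conjTranspose_kronecker, hUsa, conjTranspose_one] at hρ
    change K _ * ρ * K _ = ρ at hρ
    rw [map_sub, map_mul, map_ofNat, map_one] at hρ
    exact ((hP j).isIdempotentElem.map K).commute_of_two_mul_sub_one_conj hρ

/-- If a density matrix ρ on ℂ^M ⊗ ℂ^N has nonzero quantum discord, i.e. for every
orthonormal basis {v_j} of ℂ^M the dephasing Σ_j (|v_j⟩⟨v_j| ⊗ I) ρ (|v_j⟩⟨v_j| ⊗ I)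
differs from ρ, then there is a unitary U_A commuting with Tr_B ρ (in the sense of
leaving it invariant under conjugation) such that (U_A ⊗ I) ρ (U_A ⊗ I)ᴴ ≠ ρ:
nonzero discord implies nonzero LNU distance. -/
theorem discord_nonzero_implies_lnu_nonzero {M N : ℕ}
    (ρ : Matrix (Fin M × Fin N) (Fin M × Fin N) ℂ)
    (hherm : ρ.IsHermitian) (hpsd : ρ.PosSemidef) (htr : ρ.trace = 1)
    (hdiscord : ∀ v : Fin M → (Fin M → ℂ),
      (∀ i j, ∑ k, star (v i k) * v j k = if i = j then 1 else 0) →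
      (∑ j, ((Matrix.vecMulVec (v j) (star (v j))) ⊗ₖ (1 : Matrix (Fin N) (Fin N) ℂ)) * ρ *
          ((Matrix.vecMulVec (v j) (star (v j))) ⊗ₖ (1 : Matrix (Fin N) (Fin N) ℂ))) ≠ ρ) :
    ∃ UA : Matrix (Fin M) (Fin M) ℂ, UA ∈ Matrix.unitaryGroup (Fin M) ℂ ∧
      UA * ptraceB ρ * UAᴴ = ptraceB ρ ∧
      (UA ⊗ₖ (1 : Matrix (Fin N) (Fin N) ℂ)) * ρ *
        (UA ⊗ₖ (1 : Matrix (Fin N) (Fin N) ℂ))ᴴ ≠ ρ :=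
  discord_nonzero_implies_lnu_nonzero_general ρ hherm hdiscord
end

section
/- Let b ∈ ℝ³ be a unit vector and let ρ = (1/4)(I_2 ⊗ I_2 + σ_z ⊗ (b·σ)), where b·σ = b_1 σ_x + b_2 σ_y + b_3 σ_z. For any 2×2 unitary U of the form U = [[e^{iφ}cos θ, e^{iχ}sin θ],[−e^{−iχ}sin θ, e^{−iφ}cos θ]] (θ, φ, χ ∈ ℝ), setting ρ_f = (U ⊗ I_2) ρ (U ⊗ I_2)†, one has Tr(ρ·ρ_f) = (1/2)cos²θ. -/
open Matrix Kronecker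

/-- Pauli matrix σ_x. -/
def pauliX : Matrix (Fin 2) (Fin 2) ℂ := !![0, 1; 1, 0]

/-- Pauli matrix σ_y. -/
def pauliY : Matrix (Fin 2) (Fin 2) ℂ := !![0, -Complex.I; Complex.I, 0]

/-- Pauli matrix σ_z. -/
def pauliZ : Matrix (Fin 2) (Fin 2) ℂ := !![1, 0; 0, -1]

/-- v·σ = v₁σ_x + v₂σ_y + v₃σ_z for a real 3-vector v. -/
noncomputable def pauliDot (v : Fin 3 → ℝ) : Matrix (Fin 2) (Fin 2) ℂ :=
  (v 0 : ℂ) • pauliX + (v 1 : ℂ) • pauliY + (v 2 : ℂ) • pauliZ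

/-!
Write `B = b·σ`. Conjugating by `U ⊗ I` keeps `ρ` of the form `¼(1 + A ⊗ B)`, now with
`A = U σ_z Uᴴ`, and since `tr B = 0` the overlap of two such states is
`(4 + tr(σ_z A) · tr(B²)) / 16`. Here `B² = |b|² I`, and for `U = [[α, β], [-β̄, ᾱ]]` one gets
`tr(σ_z U σ_z Uᴴ) = 2(|α|² - |β|²) = 2(cos²θ - sin²θ)`.
-/

open Complex

section Kronecker

variable {m n R : Type*} [Fintype m] [Fintype n] [DecidableEq m] [DecidableEq n]

theorem Matrix.trace_one_add_kronecker_mul_one_add_kronecker [CommRing R]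
    (A A' : Matrix m m R) (B : Matrix n n R) (hB : B.trace = 0) :
    ((1 + A ⊗ₖ B) * (1 + A' ⊗ₖ B)).trace =
      Fintype.card m * Fintype.card n + (A * A').trace * (B * B).trace := by
  rw [← one_kronecker_one]
  simp [add_mul, mul_add, ← mul_kronecker_mul, trace_kronecker, hB]

theorem Matrix.kronecker_one_conj_one_add_kronecker [CommRing R] [StarRing R]
    {U : Matrix m m R} (hU : U * Uᴴ = 1) (A : Matrix m m R) (B : Matrix n n R) :
    (U ⊗ₖ (1 : Matrix n n R)) * (1 + A ⊗ₖ B) * (U ⊗ₖ (1 : Matrix n n R))ᴴ =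
      1 + (U * A * Uᴴ) ⊗ₖ B := by
  rw [conjTranspose_kronecker, conjTranspose_one, ← one_kronecker_one]
  simp [add_mul, mul_add, ← mul_kronecker_mul, hU]

end Kronecker

theorem trace_pauliDot (v : Fin 3 → ℝ) : (pauliDot v).trace = 0 := by
  simp [pauliDot, pauliX, pauliY, pauliZ, Matrix.trace]

theorem pauliDot_mul_self (v : Fin 3 → ℝ) :
    pauliDot v * pauliDot v = ((∑ i, v i ^ 2 : ℝ) : ℂ) • 1 := by
  ext i j
  fin_cases i <;> fin_cases j <;>
    simp [pauliDot, pauliX, pauliY, pauliZ, Matrix.mul_apply, Fin.sum_univ_three] <;>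
    ring_nf <;> simp [I_sq]

def su2Matrix (a b : ℂ) : Matrix (Fin 2) (Fin 2) ℂ := !![a, b; -star b, star a]

theorem su2Matrix_mul_conjTranspose (a b : ℂ) :
    su2Matrix a b * (su2Matrix a b)ᴴ = (a * star a + b * star b) • 1 := by
  ext i j
  fin_cases i <;> fin_cases j <;> simp [su2Matrix, Matrix.mul_apply] <;> ring

theorem trace_pauliZ_mul_su2Matrix_conj (a b : ℂ) :
    (pauliZ * (su2Matrix a b * pauliZ * (su2Matrix a b)ᴴ)).trace =
      2 * (a * star a - b * star b) := by
  simp only [Matrix.trace_fin_two, Matrix.mul_apply, Fin.sum_univ_two, Matrix.conjTranspose_apply]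
  simp [pauliZ, su2Matrix]
  ring

theorem star_exp_ofReal_mul_I_mul_ofReal (x y : ℝ) :
    star (exp (x * I) * y) = exp (-(x * I)) * y := by
  simp [← exp_conj]

theorem exp_ofReal_mul_I_mul_ofReal_mul_star_self (x y : ℝ) :
    exp (x * I) * y * star (exp (x * I) * y) = (y : ℂ) ^ 2 := by
  rw [star_exp_ofReal_mul_I_mul_ofReal]
  linear_combination (y : ℂ) ^ 2 * (by rw [← exp_add]; simp : exp (x * I) * exp (-(x * I)) = 1)

/-- For the zero-discord two-qubit state ρ = ¼(I⊗I + σ_z⊗(b·σ)) (b a unit vector)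
and any SU(2) unitary U = [[e^{iφ}cosθ, e^{iχ}sinθ],[−e^{−iχ}sinθ, e^{−iφ}cosθ]],
with ρ_f = (U⊗I)ρ(U⊗I)ᴴ one has Tr(ρρ_f) = ½cos²θ. -/
theorem zero_discord_state_lnu_overlap (b : Fin 3 → ℝ) (hb : ∑ i, b i ^ 2 = 1)
    (θ φ χ : ℝ)
    (U : Matrix (Fin 2) (Fin 2) ℂ)
    (hU : U = !![Complex.exp (φ * Complex.I) * Real.cos θ,
                 Complex.exp (χ * Complex.I) * Real.sin θ;
                 -(Complex.exp (-(χ * Complex.I)) * Real.sin θ),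
                 Complex.exp (-(φ * Complex.I)) * Real.cos θ])
    (ρ ρf : Matrix (Fin 2 × Fin 2) (Fin 2 × Fin 2) ℂ)
    (hρ : ρ = (4 : ℂ)⁻¹ • ((1 : Matrix (Fin 2 × Fin 2) (Fin 2 × Fin 2) ℂ) +
      pauliZ ⊗ₖ pauliDot b))
    (hρf : ρf = (U ⊗ₖ (1 : Matrix (Fin 2) (Fin 2) ℂ)) * ρ *
      (U ⊗ₖ (1 : Matrix (Fin 2) (Fin 2) ℂ))ᴴ) :
    (ρ * ρf).trace = ((1 / 2 : ℝ) * Real.cos θ ^ 2 : ℝ) := by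
  have hU' : U = su2Matrix (exp (φ * I) * Real.cos θ) (exp (χ * I) * Real.sin θ) := by
    simp only [hU, su2Matrix, star_exp_ofReal_mul_I_mul_ofReal]
  have hunit : U * Uᴴ = 1 := by
    rw [hU', su2Matrix_mul_conjTranspose, exp_ofReal_mul_I_mul_ofReal_mul_star_self,
      exp_ofReal_mul_I_mul_ofReal_mul_star_self, ← ofReal_pow, ← ofReal_pow, ← ofReal_add,
      Real.cos_sq_add_sin_sq, ofReal_one, one_smul]
  have hρf' : ρf = (4 : ℂ)⁻¹ • (1 + (U * pauliZ * Uᴴ) ⊗ₖ pauliDot b) := by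
    rw [hρf, hρ, Matrix.mul_smul, Matrix.smul_mul,
      Matrix.kronecker_one_conj_one_add_kronecker hunit]
  have htrace : (pauliZ * (U * pauliZ * Uᴴ)).trace =
      2 * ((Real.cos θ : ℂ) ^ 2 - (Real.sin θ : ℂ) ^ 2) := by
    rw [hU', trace_pauliZ_mul_su2Matrix_conj, exp_ofReal_mul_I_mul_ofReal_mul_star_self,
      exp_ofReal_mul_I_mul_ofReal_mul_star_self]
  rw [hρ, hρf', Matrix.smul_mul, Matrix.mul_smul, Matrix.trace_smul, Matrix.trace_smul,
    Matrix.trace_one_add_kronecker_mul_one_add_kronecker _ _ _ (trace_pauliDot b),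
    pauliDot_mul_self, hb, htrace]
  have hpyth : (Real.cos θ : ℂ) ^ 2 + (Real.sin θ : ℂ) ^ 2 = 1 := by
    exact_mod_cast Real.cos_sq_add_sin_sq θ
  simp only [ofReal_one, one_smul, Matrix.trace_one, Fintype.card_fin, smul_eq_mul,
    Nat.cast_ofNat, ofReal_mul, ofReal_pow, ofReal_div, ofReal_ofNat]
  linear_combination (-1 / 4 : ℂ) * hpyth
end
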